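/- arXiv:1005.5233 — 2 statements merged into one kernel-verified Lean document; each statement's English description precedes it below -/
import Mathlib

section
/- Consider the flat cylinder M = ℝ × (ℝ/2πℤ) with its standard product metric and the function G(x, θ) = −(1/4π)·log(cosh x − cos θ), defined away from the point (0,0). Then G is harmonic on M ∖ {(0,0)} and its only critical point is (0, π). -/
/-! Write `G = -(1/4π) log u` with `u = cosh x - cos θ ≥ 0`, which vanishes exactly at the poles.
Since `∇u = (sinh x, sin θ)` and `Δu = cosh x + cos θ`, the Laplacian `Δ log u = (u Δu - |∇u|²)/u²`
vanishes by `sinh² x + sin² θ = cosh² x - cos² θ = u (cosh x + cos θ)`. The critical points of `G`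
are the zeros of `∇u`, i.e. `x = 0` and `θ ∈ πℤ`; away from the poles this leaves `θ ∈ π + 2πℤ`. -/

open Real

/-- The Laplacian of a function on `ℝ × ℝ` (coordinates `(x, θ)` on the universal cover of the
flat cylinder). -/
noncomputable def lapP (f : ℝ × ℝ → ℝ) (p : ℝ × ℝ) : ℝ :=
  fderiv ℝ (fun q => fderiv ℝ f q (1, 0)) p (1, 0) +
    fderiv ℝ (fun q => fderiv ℝ f q (0, 1)) p (0, 1)

/-- The Green's function of the flat cylinder `ℝ × (ℝ/2πℤ)`, written in the periodic
coordinates of its universal cover. -/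
noncomputable def Gcyl : ℝ × ℝ → ℝ :=
  fun p => -(1 / (4 * π)) * Real.log (Real.cosh p.1 - Real.cos p.2)

namespace CylinderGreen

open ContinuousLinearMap

noncomputable def coshSubCos (p : ℝ × ℝ) : ℝ := cosh p.1 - cos p.2

lemma coshSubCos_nonneg (p : ℝ × ℝ) : 0 ≤ coshSubCos p := by
  unfold coshSubCos
  linarith [one_le_cosh p.1, cos_le_one p.2]

lemma coshSubCos_eq_zero_iff {p : ℝ × ℝ} :
    coshSubCos p = 0 ↔ p.1 = 0 ∧ ∃ k : ℤ, p.2 = 2 * π * k := by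
  constructor
  · intro h
    have hx : p.1 = 0 := by
      by_contra hx
      linarith [one_lt_cosh.mpr hx, cos_le_one p.2, show cosh p.1 - cos p.2 = 0 from h]
    have hcos : cos p.2 = 1 := by
      rw [coshSubCos, hx, cosh_zero] at h; linarith
    obtain ⟨k, hk⟩ := (cos_eq_one_iff p.2).mp hcos
    exact ⟨hx, k, by rw [← hk]; ring⟩
  · rintro ⟨hx, k, hθ⟩
    rw [coshSubCos, hx, hθ, cosh_zero, mul_comm, cos_int_mul_two_pi, sub_self]

lemma coshSubCos_pos {p : ℝ × ℝ} (hp : ¬(p.1 = 0 ∧ ∃ k : ℤ, p.2 = 2 * π * k)) :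
    0 < coshSubCos p :=
  (coshSubCos_nonneg p).lt_of_ne' (coshSubCos_eq_zero_iff.not.mpr hp)

lemma sinh_sq_add_sin_sq (x θ : ℝ) :
    sinh x ^ 2 + sin θ ^ 2 = (cosh x - cos θ) * (cosh x + cos θ) := by
  linear_combination (sin_sq_add_cos_sq θ) - cosh_sq x

lemma hasFDerivAt_coshSubCos (p : ℝ × ℝ) :
    HasFDerivAt coshSubCos (sinh p.1 • fst ℝ ℝ ℝ + sin p.2 • snd ℝ ℝ ℝ) p :=
  (((hasDerivAt_cosh p.1).comp_hasFDerivAt p hasFDerivAt_fst).sub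
    ((hasDerivAt_cos p.2).comp_hasFDerivAt p hasFDerivAt_snd)).congr_fderiv
    (by rw [neg_smul, sub_neg_eq_add])

variable {p : ℝ × ℝ}

lemma hasFDerivAt_Gcyl (hp : 0 < coshSubCos p) :
    HasFDerivAt Gcyl ((-(1 / (4 * π)) * (coshSubCos p)⁻¹) •
      (sinh p.1 • fst ℝ ℝ ℝ + sin p.2 • snd ℝ ℝ ℝ)) p := by
  rw [mul_smul]
  exact ((hasFDerivAt_coshSubCos p).log hp.ne').const_mul _

lemma fderiv_Gcyl_apply (hp : 0 < coshSubCos p) (v : ℝ × ℝ) :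
    fderiv ℝ Gcyl p v = -(1 / (4 * π)) * (sinh p.1 * v.1 + sin p.2 * v.2) / coshSubCos p := by
  rw [(hasFDerivAt_Gcyl hp).fderiv]
  simp only [smul_apply, add_apply, coe_fst', coe_snd', smul_eq_mul]
  ring

lemma fderiv_Gcyl_eq_zero_iff (hp : 0 < coshSubCos p) :
    fderiv ℝ Gcyl p = 0 ↔ sinh p.1 = 0 ∧ sin p.2 = 0 := by
  have hc : -(1 / (4 * π)) * (coshSubCos p)⁻¹ ≠ 0 :=
    mul_ne_zero (by simp [pi_ne_zero]) (inv_ne_zero hp.ne')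
  rw [(hasFDerivAt_Gcyl hp).fderiv, smul_eq_zero, or_iff_right hc]
  constructor
  · intro h
    exact ⟨by simpa using congr($h (1, 0)), by simpa using congr($h (0, 1))⟩
  · rintro ⟨hx, hθ⟩
    ext <;> simp [hx, hθ]

lemma fderiv_fderiv_Gcyl_apply_self (hp : 0 < coshSubCos p) (v : ℝ × ℝ) :
    fderiv ℝ (fun q => fderiv ℝ Gcyl q v) p v =
      -(1 / (4 * π)) * ((cosh p.1 * v.1 ^ 2 + cos p.2 * v.2 ^ 2) * coshSubCos p
        - (sinh p.1 * v.1 + sin p.2 * v.2) ^ 2) / coshSubCos p ^ 2 := by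
  have hnum : HasFDerivAt (fun q : ℝ × ℝ => sinh q.1 * v.1 + sin q.2 * v.2)
      ((cosh p.1 * v.1) • fst ℝ ℝ ℝ + (cos p.2 * v.2) • snd ℝ ℝ ℝ) p := by
    have h := (((hasDerivAt_sinh p.1).comp_hasFDerivAt p hasFDerivAt_fst).mul_const v.1).add
      (((hasDerivAt_sin p.2).comp_hasFDerivAt p (hasFDerivAt_snd (𝕜 := ℝ) (E := ℝ))).mul_const v.2)
    refine h.congr_fderiv ?_
    ext <;> simp [mul_comm]
  have hinv := (hasDerivAt_inv hp.ne').comp_hasFDerivAt p (hasFDerivAt_coshSubCos p)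
  have hloc : (fun q => fderiv ℝ Gcyl q v) =ᶠ[nhds p]
      fun q => -(1 / (4 * π)) * (sinh q.1 * v.1 + sin q.2 * v.2) * (coshSubCos q)⁻¹ := by
    filter_upwards [(hasFDerivAt_coshSubCos p).continuousAt.eventually_const_lt hp] with q hq
    rw [fderiv_Gcyl_apply hq, div_eq_mul_inv]
  have hG : HasFDerivAt
      (fun q => -(1 / (4 * π)) * (sinh q.1 * v.1 + sin q.2 * v.2) * (coshSubCos q)⁻¹) _ p :=
    (hnum.const_mul _).mul hinv
  rw [hloc.fderiv_eq, hG.fderiv]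
  simp only [add_apply, smul_apply, coe_fst', coe_snd', smul_eq_mul]
  field_simp
  ring

lemma lapP_Gcyl (hp : 0 < coshSubCos p) : lapP Gcyl p = 0 := by
  rw [lapP, fderiv_fderiv_Gcyl_apply_self hp, fderiv_fderiv_Gcyl_apply_self hp]
  have hgrad : sinh p.1 ^ 2 + sin p.2 ^ 2 = coshSubCos p * (cosh p.1 + cos p.2) :=
    sinh_sq_add_sin_sq p.1 p.2
  field_simp
  linear_combination hgrad

lemma sinh_eq_zero_and_sin_eq_zero_iff (hp : coshSubCos p ≠ 0) :
    sinh p.1 = 0 ∧ sin p.2 = 0 ↔ p.1 = 0 ∧ ∃ k : ℤ, p.2 = π + 2 * π * k := by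
  rw [sinh_eq_zero]
  refine and_congr_right fun hx => ?_
  have hcos : cos p.2 ≠ 1 := fun h => hp (by rw [coshSubCos, hx, cosh_zero, h, sub_self])
  rw [sin_eq_zero_iff_cos_eq, or_iff_right hcos, cos_eq_neg_one_iff]
  exact exists_congr fun k => by rw [eq_comm, mul_comm]

end CylinderGreen

open CylinderGreen in
/-- On the flat cylinder `ℝ × (ℝ/2πℤ)`, the function
`G(x, θ) = −(1/4π) log (cosh x − cos θ)` is harmonic away from the pole `(0, 0)` (i.e. away
from the points `(0, 2πk)` of the universal cover) and its only critical point is `(0, π)`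
(i.e. the points `(0, π + 2πk)` of the universal cover). -/
theorem cylinder_green_harmonic_and_critical_point :
    (∀ p : ℝ × ℝ, ¬(p.1 = 0 ∧ ∃ k : ℤ, p.2 = 2 * π * k) → lapP Gcyl p = 0) ∧
    (∀ p : ℝ × ℝ, ¬(p.1 = 0 ∧ ∃ k : ℤ, p.2 = 2 * π * k) →
      (fderiv ℝ Gcyl p = 0 ↔ p.1 = 0 ∧ ∃ k : ℤ, p.2 = π + 2 * π * k)) := by
  refine ⟨fun p hp => lapP_Gcyl (coshSubCos_pos hp), fun p hp => ?_⟩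
  have hu := coshSubCos_pos hp
  rw [fderiv_Gcyl_eq_zero_iff hu]
  exact sinh_eq_zero_and_sin_eq_zero_iff hu.ne'
end

section
/- The function f(x₁, x₂, x₃) = x₁² − x₂² + (x₁² + x₂²)·x₃ − (2/3)·x₃³ is harmonic on ℝ³, the origin is a critical point of f, and the lowest-degree nonzero homogeneous term of f at the origin is P(x) = x₁² − x₂², whose critical set is the line {x₁ = x₂ = 0} (so the origin is not an isolated critical point of P). -/
/-!
The pure second partials of `f` are `2 + 2x₃`, `2x₃ - 2` and `-4x₃`, which sum to zero; its gradient
`(2x₁(1 + x₃), 2x₂(x₃ - 1), x₁² + x₂² - 2x₃²)` vanishes at the origin. The gradient of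
`P = x₁² − x₂²` is `(2x₁, −2x₂, 0)`, which vanishes exactly on the `x₃`-axis.
-/

/-- The Euclidean Laplacian of a function on `ℝⁿ`. -/
noncomputable def lap {n : ℕ} (f : EuclideanSpace ℝ (Fin n) → ℝ)
    (x : EuclideanSpace ℝ (Fin n)) : ℝ :=
  ∑ i, fderiv ℝ (fun y => fderiv ℝ f y (EuclideanSpace.single i 1)) x
    (EuclideanSpace.single i 1)

@[simp]
theorem EuclideanSpace.fderiv_apply {ι : Type*} [Fintype ι] (i : ι) (y : EuclideanSpace ℝ ι) :
    fderiv ℝ (fun x : EuclideanSpace ℝ ι => x i) y = EuclideanSpace.proj i :=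
  (PiLp.hasFDerivAt_apply 2 y i).fderiv

theorem fderiv_sq_sub_sq_apply {ι : Type*} [Fintype ι] (i j : ι) (y v : EuclideanSpace ℝ ι) :
    fderiv ℝ (fun x : EuclideanSpace ℝ ι => x i ^ 2 - x j ^ 2) y v =
      2 * y i * v i - 2 * y j * v j := by
  simp (disch := fun_prop) [fderiv_fun_sub, fderiv_fun_pow]

theorem fderiv_sq_sub_sq_eq_zero_iff {ι : Type*} [Fintype ι] {i j : ι} (hij : i ≠ j)
    (y : EuclideanSpace ℝ ι) :
    fderiv ℝ (fun x : EuclideanSpace ℝ ι => x i ^ 2 - x j ^ 2) y = 0 ↔ y i = 0 ∧ y j = 0 := by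
  classical
  constructor
  · intro hy
    have hi := fderiv_sq_sub_sq_apply i j y (EuclideanSpace.single i 1)
    have hj := fderiv_sq_sub_sq_apply i j y (EuclideanSpace.single j 1)
    simp [hy, hij, hij.symm] at hi hj
    exact ⟨hi, hj⟩
  · rintro ⟨hi, hj⟩
    ext v
    simp [fderiv_sq_sub_sq_apply, hi, hj]

noncomputable def cusp (x : EuclideanSpace ℝ (Fin 3)) : ℝ :=
  x 0 ^ 2 - x 1 ^ 2 + (x 0 ^ 2 + x 1 ^ 2) * x 2 - 2 / 3 * x 2 ^ 3

theorem fderiv_cusp_apply (y v : EuclideanSpace ℝ (Fin 3)) :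
    fderiv ℝ cusp y v = 2 * y 0 * (1 + y 2) * v 0 + 2 * y 1 * (y 2 - 1) * v 1 +
      (y 0 ^ 2 + y 1 ^ 2 - 2 * y 2 ^ 2) * v 2 := by
  unfold cusp
  simp (disch := fun_prop) [fderiv_fun_sub, fderiv_fun_add, fderiv_fun_pow, fderiv_fun_mul]
  ring

theorem fderiv_cusp_zero : fderiv ℝ cusp 0 = 0 := by
  ext v
  simp [fderiv_cusp_apply]

theorem lap_cusp (x : EuclideanSpace ℝ (Fin 3)) : lap cusp x = 0 := by
  have hpartials : lap cusp x = (2 + 2 * x 2) + (2 * x 2 - 2) + -4 * x 2 := by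
    simp only [lap, Fin.sum_univ_three, fderiv_cusp_apply]
    simp (disch := fun_prop) [fderiv_fun_sub, fderiv_fun_add, fderiv_fun_pow, fderiv_fun_mul]
    ring
  rw [hpartials]
  ring

/-- The function `f(x₁,x₂,x₃) = x₁² − x₂² + (x₁² + x₂²)x₃ − (2/3)x₃³` is harmonic on `ℝ³`,
the origin is a critical point of `f`, its lowest-degree nonzero homogeneous term at the
origin is the quadratic `P = x₁² − x₂²` (the remainder being homogeneous of degree 3), and the
critical set of `P` is the line `{x₁ = x₂ = 0}`, so the origin is not an isolated critical
point of `P`. -/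
theorem cusp_example_harmonic :
    let f : EuclideanSpace ℝ (Fin 3) → ℝ := fun x =>
      x 0 ^ 2 - x 1 ^ 2 + (x 0 ^ 2 + x 1 ^ 2) * x 2 - 2 / 3 * x 2 ^ 3
    let P : EuclideanSpace ℝ (Fin 3) → ℝ := fun x => x 0 ^ 2 - x 1 ^ 2
    let R : EuclideanSpace ℝ (Fin 3) → ℝ := fun x =>
      (x 0 ^ 2 + x 1 ^ 2) * x 2 - 2 / 3 * x 2 ^ 3
    (∀ x, lap f x = 0) ∧
    fderiv ℝ f 0 = 0 ∧
    (∀ x, f x = P x + R x) ∧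
    (∀ (t : ℝ) (x : EuclideanSpace ℝ (Fin 3)), R (t • x) = t ^ 3 * R x) ∧
    {x : EuclideanSpace ℝ (Fin 3) | fderiv ℝ P x = 0} =
      {x : EuclideanSpace ℝ (Fin 3) | x 0 = 0 ∧ x 1 = 0} := by
  intro f P R
  refine ⟨lap_cusp, fderiv_cusp_zero, fun x => ?_, fun t x => ?_, ?_⟩
  · simp only [f, P, R]
    ring
  · simp only [R, PiLp.smul_apply, smul_eq_mul]
    ring
  · ext x
    exact fderiv_sq_sub_sq_eq_zero_iff (by decide) x
end
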